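/- Let n_1,…,n_k ≥ 1, n = n_1 + ⋯ + n_k ≥ 2, and let g ≥ 1 divide every n_c. Let α be the canonical configuration, let f and P_g be the shift permutation and port assignment of Lemma 5, and let x : Fin n → ℕ → Bool be compatible with α. Then x ∘ f = x, and for every i ∈ Fin n and every t ∈ ℕ the consistency class {l ∈ Fin n : K^{P_g,x} l t = K^{P_g,x} i t} is invariant under f, i.e., if K^{P_g,x} l t = K^{P_g,x} i t then K^{P_g,x} (f l) t = K^{P_g,x} i t. (This is Claim 7 of the paper: every facet of the consistency projection of a positive-probability realization is closed under the equivalence classes ⟦i⟧ induced by f.) -/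
import Mathlib


open MeasureTheory Filter
open scoped ENNReal

/-- Message-passing knowledge values at time `t` (for `m = n - 1` ports): `init` at time `0`;
at time `t+1` a knowledge value is the previous knowledge, the fresh random bit, and the
vector of the previous knowledge values received on the `m` ports. (This is the time-indexed
form of the inductive type `W` with constructors `init : W` and
`step : W → Bool → (Fin (n-1) → W) → W`.) -/
def MPW (m : ℕ) : ℕ → Type
  | 0 => PUnit
  | t + 1 => MPW m t × Bool × (Fin m → MPW m t)

/-- The message-passing knowledge `K^{P,x} i t` of node `i` at time `t`, given the port
assignment `P` and the bit sequences `x`: `K^{P,x} i 0 = init` and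
`K^{P,x} i (t+1) = step (K^{P,x} i t) (x i t) (fun j => K^{P,x} (P i j) t)`. -/
def mpK {n : ℕ} (P : Fin n → Fin (n - 1) → Fin n) (x : Fin n → ℕ → Bool) :
    Fin n → (t : ℕ) → MPW (n - 1) t
  | _, 0 => PUnit.unit
  | i, t + 1 => (mpK P x i t, x i t, fun j => mpK P x (P i j) t)

/-- `α : Fin n → Fin k` is the canonical configuration for fiber sizes `nn` if it sends `i`
to the unique `c` with `nn 0 + ⋯ + nn (c-1) ≤ i < nn 0 + ⋯ + nn c`. -/
def IsCanonical {n k : ℕ} (nn : Fin k → ℕ) (α : Fin n → Fin k) : Prop :=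
  ∀ i : Fin n,
    (∑ c ∈ Finset.univ.filter (fun c => c < α i), nn c) ≤ (i : ℕ) ∧
    (i : ℕ) < ∑ c ∈ Finset.univ.filter (fun c => c ≤ α i), nn c

theorem shift_lt {n g i : ℕ} (hg : 0 < g) (hgn : g ∣ n) (hi : i < n) :
    g * (i / g) + ((i % g + 1) % g) < n := by
  have h1 : (i % g + 1) % g < g := Nat.mod_lt _ hg
  have h2 : i / g < n / g := Nat.div_lt_div_of_lt_of_dvd hgn hi
  calc g * (i / g) + ((i % g + 1) % g)
      < g * (i / g) + g := by omega
    _ = g * (i / g + 1) := (Nat.mul_succ g _).symm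
    _ ≤ g * (n / g) := Nat.mul_le_mul_left _ h2
    _ = n := Nat.mul_div_cancel' hgn

/-- The shift permutation `f` of Lemma 5: `f i = g⌊i/g⌋ + ((i mod g + 1) mod g)`. -/
def shiftF (n g : ℕ) (hg : 0 < g) (hgn : g ∣ n) : Fin n → Fin n :=
  fun i => ⟨g * ((i : ℕ) / g) + (((i : ℕ) % g + 1) % g), shift_lt hg hgn i.isLt⟩

/-- The port assignment `P_g` of Lemma 5: node `i`'s port `j ∈ {1,…,n-1}` (represented by
`j : Fin (n-1)`, standing for the port number `(j : ℕ) + 1`) is connected to node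
`((i + j) mod g + g⌊i/g⌋ + g⌊j/g⌋) mod n`. -/
def portG (n g : ℕ) (hn : 0 < n) : Fin n → Fin (n - 1) → Fin n :=
  fun i j =>
    ⟨(((i : ℕ) + ((j : ℕ) + 1)) % g + g * ((i : ℕ) / g) + g * (((j : ℕ) + 1) / g)) % n,
      Nat.mod_lt _ hn⟩

theorem dvd_of_dvd_fibers {k n g : ℕ} (nn : Fin k → ℕ) (hsum : n = ∑ c, nn c)
    (hgdvd : ∀ c, g ∣ nn c) : g ∣ n :=
  hsum ▸ Finset.dvd_sum fun c _ => hgdvd c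

/-- Key commutation: `P_g (f i) j = f (P_g i j)`. -/
theorem portG_shiftF {n g : ℕ} (hg : 0 < g) (hgn : g ∣ n) (hn : 0 < n)
    (i : Fin n) (j : Fin (n - 1)) :
    portG n g hn (shiftF n g hg hgn i) j = shiftF n g hg hgn (portG n g hn i j) := by
  apply Fin.ext
  show ((((g * ((i : ℕ) / g) + (((i : ℕ) % g + 1) % g)) + ((j : ℕ) + 1)) % g
        + g * ((g * ((i : ℕ) / g) + (((i : ℕ) % g + 1) % g)) / g)
        + g * (((j : ℕ) + 1) / g)) % n)
      = g * (((((i : ℕ) + ((j : ℕ) + 1)) % g + g * ((i : ℕ) / g)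
            + g * (((j : ℕ) + 1) / g)) % n) / g)
        + ((((((i : ℕ) + ((j : ℕ) + 1)) % g + g * ((i : ℕ) / g)
            + g * (((j : ℕ) + 1) / g)) % n) % g + 1) % g)
  set a : ℕ := (i : ℕ)
  set b : ℕ := (j : ℕ) + 1
  have hr : (a % g + 1) % g < g := Nat.mod_lt _ hg
  have hdiv : (g * (a / g) + (a % g + 1) % g) / g = a / g := by
    rw [Nat.mul_add_div hg, Nat.div_eq_of_lt hr, Nat.add_zero]
  have hmod : (g * (a / g) + (a % g + 1) % g) % g = (a % g + 1) % g := by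
    rw [Nat.mul_add_mod, Nat.mod_eq_of_lt hr]
  set s : ℕ := (a + b) % g with hsdef
  have hs : s < g := Nat.mod_lt _ hg
  have hfj : (g * (a / g) + (a % g + 1) % g + b) % g = (s + 1) % g := by
    rw [hsdef, Nat.mod_add_mod, add_assoc, Nat.mul_add_mod, Nat.mod_add_mod,
      Nat.mod_add_mod, show a + 1 + b = a + b + 1 by ring]
  have hgn' : g ≤ n := Nat.le_of_dvd hn hgn
  set M : ℕ := g * (a / g) + g * (b / g) with hMdef
  have hMd : g ∣ M % n := (Nat.dvd_mod_iff hgn).mpr (dvd_add ⟨_, rfl⟩ ⟨_, rfl⟩)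
  obtain ⟨m, hm⟩ := hMd
  have hmn : g * m < n := hm ▸ Nat.mod_lt _ hn
  obtain ⟨q, hq⟩ := hgn
  have hmq : m < q := by
    have := hmn
    rw [hq] at this
    exact lt_of_mul_lt_mul_left this (Nat.zero_le g)
  have hmle : g * m + g ≤ n := by
    have : g * (m + 1) ≤ g * q := Nat.mul_le_mul_left g hmq
    rw [Nat.mul_add, Nat.mul_one] at this
    omega
  have hkey : ∀ r : ℕ, r < g → (r + M) % n = r + g * m := by
    intro r hrg
    rw [Nat.add_mod, hm, Nat.mod_eq_of_lt (by omega : r < n),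
      Nat.mod_eq_of_lt (by omega : r + g * m < n)]
  have ha : (s + g * (a / g) + g * (b / g)) % n = s + g * m := by
    rw [add_assoc, ← hMdef, hkey s hs]
  rw [hfj, hdiv, add_assoc, ← hMdef, hkey _ (Nat.mod_lt _ hg), ha,
    Nat.add_mul_div_left _ _ hg, Nat.div_eq_of_lt hs, Nat.zero_add,
    Nat.add_mul_mod_self_left, Nat.mod_eq_of_lt hs]
  ring

/-- `α` is invariant under the shift. -/
theorem alpha_shiftF {n k g : ℕ} (nn : Fin k → ℕ) (hg : 0 < g)
    (hgdvd : ∀ c, g ∣ nn c) (hgn : g ∣ n)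
    (α : Fin n → Fin k) (hα : IsCanonical nn α) (i : Fin n) :
    α (shiftF n g hg hgn i) = α i := by
  set fi := shiftF n g hg hgn i with hfi
  obtain ⟨hL, hU⟩ := hα i
  obtain ⟨hL', hU'⟩ := hα fi
  have hsub : ∀ c1 c2 : Fin k, c1 < c2 →
      (∑ c ∈ Finset.univ.filter (fun c => c ≤ c1), nn c)
        ≤ ∑ c ∈ Finset.univ.filter (fun c => c < c2), nn c := by
    intro c1 c2 h
    apply Finset.sum_le_sum_of_subset
    intro c hc
    simp only [Finset.mem_filter, Finset.mem_univ, true_and] at *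
    exact lt_of_le_of_lt hc h
  -- divisibility of the partial sums
  obtain ⟨l, hl⟩ : g ∣ ∑ c ∈ Finset.univ.filter (fun c => c < α i), nn c :=
    Finset.dvd_sum fun c _ => hgdvd c
  obtain ⟨u, hu⟩ : g ∣ ∑ c ∈ Finset.univ.filter (fun c => c ≤ α i), nn c :=
    Finset.dvd_sum fun c _ => hgdvd c
  have hiv : (i : ℕ) = g * ((i : ℕ) / g) + (i : ℕ) % g := (Nat.div_add_mod _ _).symm
  have himod : (i : ℕ) % g < g := Nat.mod_lt _ hg
  have hrlt : ((i : ℕ) % g + 1) % g < g := Nat.mod_lt _ hg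
  have hfiv : (fi : ℕ) = g * ((i : ℕ) / g) + ((i : ℕ) % g + 1) % g := rfl
  -- L ≤ g*(i/g) : since g*l ≤ i
  have hLq : g * l ≤ g * ((i : ℕ) / g) := by
    rcases le_or_gt l ((i : ℕ) / g) with h | h
    · exact Nat.mul_le_mul_left g h
    · exfalso
      have : g * ((i : ℕ) / g + 1) ≤ g * l := Nat.mul_le_mul_left g h
      rw [Nat.mul_add, Nat.mul_one] at this
      omega
  have hUq : g * ((i : ℕ) / g) + g ≤ g * u := by
    rcases le_or_gt ((i : ℕ) / g + 1) u with h | h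
    · have := Nat.mul_le_mul_left g h
      rw [Nat.mul_add, Nat.mul_one] at this
      omega
    · exfalso
      have : g * u ≤ g * ((i : ℕ) / g) := Nat.mul_le_mul_left g (by omega)
      omega
  have hLfi : (∑ c ∈ Finset.univ.filter (fun c => c < α i), nn c) ≤ (fi : ℕ) := by
    rw [hl, hfiv]; omega
  have hUfi : (fi : ℕ) < ∑ c ∈ Finset.univ.filter (fun c => c ≤ α i), nn c := by
    rw [hu, hfiv]; omega
  rcases lt_trichotomy (α fi) (α i) with h | h | h
  · exfalso
    have := hsub _ _ h
    omega
  · exact h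
  · exfalso
    have := hsub _ _ h
    omega

theorem mpK_shiftF {n g : ℕ} (hg : 0 < g) (hgn : g ∣ n) (hn : 0 < n)
    (x : Fin n → ℕ → Bool)
    (hxf : ∀ i : Fin n, x (shiftF n g hg hgn i) = x i) :
    ∀ (t : ℕ) (l : Fin n),
      mpK (portG n g hn) x (shiftF n g hg hgn l) t = mpK (portG n g hn) x l t := by
  intro t
  induction t with
  | zero => intro l; rfl
  | succ t ih =>
    intro l
    show (mpK _ x (shiftF n g hg hgn l) t, x (shiftF n g hg hgn l) t,
        fun j => mpK _ x (portG n g hn (shiftF n g hg hgn l) j) t)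
      = (mpK _ x l t, x l t, fun j => mpK _ x (portG n g hn l j) t)
    refine Prod.ext (ih l) (Prod.ext ?_ ?_)
    · simp [hxf l]
    · funext j
      simp only
      rw [portG_shiftF hg hgn hn, ih]

/-- **Claim 7.** With the canonical configuration `α`, `g ≥ 1` dividing every fiber size,
the shift permutation `f` and port assignment `P_g` of Lemma 5, and `x` compatible with `α`:
`x ∘ f = x`, and every consistency class is invariant under `f` — if
`K^{P_g,x} l t = K^{P_g,x} i t` then `K^{P_g,x} (f l) t = K^{P_g,x} i t`. -/
theorem consistency_class_invariant_under_shift (n k g : ℕ) (hn : 2 ≤ n)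
    (nn : Fin k → ℕ) (hnn : ∀ c, 1 ≤ nn c) (hsum : n = ∑ c, nn c)
    (hg : 0 < g) (hgdvd : ∀ c, g ∣ nn c)
    (α : Fin n → Fin k) (hα : IsCanonical nn α)
    (x : Fin n → ℕ → Bool) (hx : ∀ i j, α i = α j → x i = x j) :
    (∀ i : Fin n, x (shiftF n g hg (dvd_of_dvd_fibers nn hsum hgdvd) i) = x i) ∧
    (∀ (i : Fin n) (t : ℕ) (l : Fin n),
      mpK (portG n g (by omega)) x l t = mpK (portG n g (by omega)) x i t →
      mpK (portG n g (by omega)) x (shiftF n g hg (dvd_of_dvd_fibers nn hsum hgdvd) l) t =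
        mpK (portG n g (by omega)) x i t) := by

  have hgn := dvd_of_dvd_fibers nn hsum hgdvd
  have hxf : ∀ i : Fin n, x (shiftF n g hg hgn i) = x i := fun i =>
    hx _ _ (alpha_shiftF nn hg hgdvd hgn α hα i)
  exact ⟨hxf, fun i t l h => by
    rw [mpK_shiftF hg hgn (by omega) x hxf t l, h]⟩
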